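/- arXiv:1901.04031 — 3 statements merged into one kernel-verified Lean document; each statement's English description precedes it below -/
import Mathlib

section
/- For all natural numbers n and k ≥ 1, the congruence C(n, 2^{k+1}) ≡ C(n, 2^k)·C(⌊(n-1)/2⌋, 2^k) + C(n-2^k, 2^k)·C(⌊(n+2^k-1)/2⌋, 2^k) (mod 2) holds, where binomial coefficients C(a,b) with a < b (or with negative upper index interpreted as n < 2^k, i.e. n - 2^k taken in ℤ) are zero. -/
lemma choose_pow_two_mod_two (m n : ℕ) :
    Nat.choose n (2 ^ m) % 2 = n / 2 ^ m % 2 := by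
  induction m generalizing n with
  | zero => simp [Nat.choose_one_right]
  | succ m ih =>
    have h := Choose.choose_modEq_choose_mod_mul_choose_div_nat (p := 2) (n := n)
      (k := 2 ^ (m + 1))
    have h2 : 2 ^ (m + 1) % 2 = 0 := by
      simp [pow_succ, Nat.mul_mod_left]
    have h3 : 2 ^ (m + 1) / 2 = 2 ^ m := by
      rw [pow_succ, Nat.mul_div_cancel] ; norm_num
    rw [h2, h3, Nat.choose_zero_right, one_mul] at h
    rw [h, ih, Nat.div_div_eq_div_mul, mul_comm, ← pow_succ]

lemma divPB (P a b : ℕ) (hP : 0 < P) (hb : b < P) : (P * a + b) / P = a := by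
  rw [Nat.mul_add_div hP, Nat.div_eq_of_lt hb, add_zero]

lemma fin1 (M : ℕ) : M / 2 ≡ M * (M / 2) + (M - 1) * ((M + 1) / 2) [MOD 2] := by
  show M / 2 % 2 = _ % 2
  rw [Nat.add_mod, Nat.mul_mod M, Nat.mul_mod (M - 1)]
  rcases Nat.mod_two_eq_zero_or_one M with h | h <;>
    rcases Nat.mod_two_eq_zero_or_one (M - 1) with h' | h' <;>
      rw [h, h'] <;> simp <;> omega

lemma fin2 (M : ℕ) (hM : 1 ≤ M) :
    M / 2 ≡ M * ((M - 1) / 2) + (M - 1) * (M / 2) [MOD 2] := by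
  show M / 2 % 2 = _ % 2
  rw [Nat.add_mod, Nat.mul_mod M, Nat.mul_mod (M - 1)]
  rcases Nat.mod_two_eq_zero_or_one M with h | h <;>
    rcases Nat.mod_two_eq_zero_or_one (M - 1) with h' | h' <;>
      rw [h, h'] <;> simp <;> omega

/-- For `n : ℕ` and `k ≥ 1`,
`C(n, 2^(k+1)) ≡ C(n,2^k)·C(⌊(n-1)/2⌋,2^k) + C(n-2^k,2^k)·C(⌊(n+2^k-1)/2⌋,2^k) (mod 2)`,
where truncated subtraction together with `C(a,b) = 0` for `a < b` implements the
convention that out-of-range binomial coefficients vanish. -/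
theorem stmt2 (n k : ℕ) (hk : 1 ≤ k) :
    Nat.choose n (2 ^ (k + 1)) ≡
      Nat.choose n (2 ^ k) * Nat.choose ((n - 1) / 2) (2 ^ k) +
        Nat.choose (n - 2 ^ k) (2 ^ k) * Nat.choose ((n + 2 ^ k - 1) / 2) (2 ^ k) [MOD 2] := by
  have key : ∀ m : ℕ, Nat.choose m (2 ^ k) ≡ m / 2 ^ k [MOD 2] := fun m =>
    choose_pow_two_mod_two k m
  have key1 : Nat.choose n (2 ^ (k + 1)) ≡ n / 2 ^ (k + 1) [MOD 2] :=
    choose_pow_two_mod_two (k + 1) n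
  refine key1.trans (Nat.ModEq.trans ?_
    ((((key n).mul (key _)).add ((key _).mul (key _))).symm))
  set P := 2 ^ k with hPdef
  have hP : 2 ≤ P := by
    calc 2 = 2 ^ 1 := (pow_one 2).symm
    _ ≤ 2 ^ k := Nat.pow_le_pow_right (by norm_num) hk
  have hP0 : 0 < P := by omega
  have hpow : 2 ^ (k + 1) = P * 2 := by rw [hPdef, pow_succ]
  have comm : ∀ a : ℕ, a / 2 / P = a / P / 2 := fun a => by
    rw [Nat.div_div_eq_div_mul, mul_comm, ← Nat.div_div_eq_div_mul]
  rw [hpow, ← Nat.div_div_eq_div_mul, comm (n - 1), comm (n + P - 1)]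
  obtain ⟨M, u, hu, hn⟩ : ∃ M u, u < P ∧ n = P * M + u :=
    ⟨n / P, n % P, Nat.mod_lt _ hP0, (Nat.div_add_mod n P).symm⟩
  have h1 : n / P = M := by rw [hn]; exact divPB P M u hP0 hu
  rcases Nat.eq_zero_or_pos u with hu0 | hu1
  · -- u = 0
    rcases Nat.eq_zero_or_pos M with hM0 | hM1
    · -- n = 0
      have hn0 : n = 0 := by
        have : P * M = 0 := by rw [hM0, mul_zero]
        omega
      subst hn0
      simp only [Nat.zero_sub, Nat.zero_div, Nat.zero_add, Nat.mul_zero]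
      have h5 : (P - 1) / P = 0 := Nat.div_eq_of_lt (by omega)
      simp [Nat.ModEq, h5]
    · -- n = P * M, M ≥ 1
      have hmul : P * M = P * (M - 1) + P := by
        have : M - 1 + 1 = M := by omega
        calc P * M = P * (M - 1 + 1) := by rw [this]
        _ = P * (M - 1) + P := by ring
      have h2 : (n - 1) / P = M - 1 := by
        have : n - 1 = P * (M - 1) + (P - 1) := by omega
        rw [this]; exact divPB P (M - 1) (P - 1) hP0 (by omega)
      have h3 : (n - P) / P = M - 1 := by
        have : n - P = P * (M - 1) + 0 := by omega
        rw [this]; exact divPB P (M - 1) 0 hP0 hP0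
      have h4 : (n + P - 1) / P = M := by
        have : n + P - 1 = P * M + (P - 1) := by omega
        rw [this]; exact divPB P M (P - 1) hP0 (by omega)
      rw [h1, h2, h3, h4]
      exact fin2 M hM1
  · -- u ≥ 1
    have hmul : P * (M + 1) = P * M + P := by ring
    have h2 : (n - 1) / P = M := by
      have : n - 1 = P * M + (u - 1) := by omega
      rw [this]; exact divPB P M (u - 1) hP0 (by omega)
    have h3 : (n - P) / P = M - 1 := by
      rcases Nat.eq_zero_or_pos M with hM0 | hM1
      · have : n - P = 0 := by
          have : P * M = 0 := by rw [hM0, mul_zero]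
          omega
        rw [this, hM0, Nat.zero_div]
      · have hmul' : P * M = P * (M - 1) + P := by
          have : M - 1 + 1 = M := by omega
          calc P * M = P * (M - 1 + 1) := by rw [this]
          _ = P * (M - 1) + P := by ring
        have : n - P = P * (M - 1) + u := by omega
        rw [this]; exact divPB P (M - 1) u hP0 hu
    have h4 : (n + P - 1) / P = M + 1 := by
      have : n + P - 1 = P * (M + 1) + (u - 1) := by omega
      rw [this]; exact divPB P (M + 1) (u - 1) hP0 (by omega)
    rw [h1, h2, h3, h4]
    exact fin1 M
end

section
/- There are no natural numbers k, m, a, l, b, n with a ≥ k and k < m satisfying simultaneously 2^m > (l + b·2^{a−k})·2^{k+1} − n·2^{m+1} and (l + b·2^{a−k})·2^{k+1} − n·2^{m+1} ≥ max(2^m − 2^k, 1). -/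
/-! The quantity `(l + b·2^(a−k))·2^(k+1) − n·2^(m+1)` is a multiple of `2^(k+1)`, and so is `2^m`
because `k < m`. A multiple of `2^(k+1)` lying below `2^m` lies at or below `2^m − 2^(k+1)`,
hence strictly below `2^m − 2^k`. -/

theorem Int.le_sub_of_dvd_of_lt {d x y : ℤ} (hx : d ∣ x) (hy : d ∣ y) (hxy : x < y) :
    x ≤ y - d := by
  have := Int.le_of_dvd (sub_pos.2 hxy) (dvd_sub hy hx)
  linarith

theorem Int.lt_two_pow_sub_two_pow_of_dvd {k m : ℕ} {x : ℤ} (hkm : k < m)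
    (hx : 2 ^ (k + 1) ∣ x) (hxm : x < 2 ^ m) : x < 2 ^ m - 2 ^ k := by
  have hle : x ≤ 2 ^ m - 2 ^ (k + 1) :=
    Int.le_sub_of_dvd_of_lt hx (pow_dvd_pow 2 hkm) hxm
  have : (2 : ℤ) ^ k < 2 ^ (k + 1) := pow_lt_pow_right₀ one_lt_two k.lt_succ_self
  linarith

/-- There are no natural numbers `k, m, a, l, b, n` with `a ≥ k` and `k < m` such that
`2^m > (l + b·2^(a−k))·2^(k+1) − n·2^(m+1) ≥ max(2^m − 2^k, 1)` (computed in `ℤ`). -/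
theorem stmt5 :
    ¬ ∃ k m a l b n : ℕ, k ≤ a ∧ k < m ∧
      ((2 ^ m : ℤ) > ((l : ℤ) + (b : ℤ) * 2 ^ (a - k)) * 2 ^ (k + 1) - (n : ℤ) * 2 ^ (m + 1)) ∧
      (((l : ℤ) + (b : ℤ) * 2 ^ (a - k)) * 2 ^ (k + 1) - (n : ℤ) * 2 ^ (m + 1) ≥
        max ((2 ^ m : ℤ) - 2 ^ k) 1) := by
  rintro ⟨k, m, a, l, b, n, -, hkm, hlt, hge⟩
  have hdvd : (2 : ℤ) ^ (k + 1) ∣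
      ((l : ℤ) + (b : ℤ) * 2 ^ (a - k)) * 2 ^ (k + 1) - (n : ℤ) * 2 ^ (m + 1) :=
    dvd_sub (dvd_mul_left _ _) (dvd_mul_of_dvd_right (pow_dvd_pow 2 (by omega)) _)
  have hbelow := Int.lt_two_pow_sub_two_pow_of_dvd hkm hdvd hlt
  linarith [le_max_left ((2 ^ m : ℤ) - 2 ^ k) 1]
end

section
/- For k ≥ 0 and n ≥ 0 let q(k,n) := C(n,2^k) mod 2 ∈ ℤ/2. Then q(0,n) = n mod 2, and C(n, 2^{k+1}) ≡ C(n,2^k)·C(⌊(n−1)/2⌋,2^k) + C(n−2^k,2^k)·C(⌊(n+2^k−1)/2⌋,2^k) (mod 2). -/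
private lemma mydiv_helper (m a b : ℕ) (hm : 0 < m) (hb : b < m) : (m * a + b) / m = a := by
  rw [Nat.mul_add_div hm, Nat.div_eq_of_lt hb, add_zero]

private lemma key (k n : ℕ) : ((Nat.choose n (2 ^ k) : ZMod 2)) = ((n / 2 ^ k % 2 : ℕ) : ZMod 2) := by
  induction k generalizing n with
  | zero =>
    simp [Nat.choose_one_right, ZMod.natCast_mod]
  | succ k ih =>
    haveI : Fact (Nat.Prime 2) := ⟨Nat.prime_two⟩
    have h := Choose.choose_modEq_choose_mod_mul_choose_div_nat (p := 2) (n := n) (k := 2 ^ (k+1))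
    have h2a : 2 ^ (k+1) % 2 = 0 := by
      rw [pow_succ]; simp [Nat.mul_mod]
    have h2b : 2 ^ (k+1) / 2 = 2 ^ k := by
      rw [pow_succ]; exact Nat.mul_div_cancel _ two_pos
    rw [h2a, h2b, Nat.choose_zero_right, one_mul] at h
    have := (ZMod.natCast_eq_natCast_iff _ _ _).mpr h
    rw [this, ih (n / 2), Nat.div_div_eq_div_mul, ← pow_succ']

/-- The sequence `q(k,n) := C(n, 2^k) mod 2` satisfies `q(0,n) = n mod 2` and the
recursion `C(n, 2^(k+1)) ≡ C(n,2^k)·C(⌊(n−1)/2⌋,2^k) + C(n−2^k,2^k)·C(⌊(n+2^k−1)/2⌋,2^k)`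
(mod 2), with the convention that out-of-range binomial coefficients vanish. -/
theorem stmt12 (n k : ℕ) :
    ((Nat.choose n (2 ^ 0) : ZMod 2) = (n : ZMod 2)) ∧
    ((Nat.choose n (2 ^ (k + 1)) : ZMod 2) =
      (Nat.choose n (2 ^ k) : ZMod 2) * (Nat.choose ((n - 1) / 2) (2 ^ k) : ZMod 2) +
        (Nat.choose (n - 2 ^ k) (2 ^ k) : ZMod 2) *
          (Nat.choose ((n + 2 ^ k - 1) / 2) (2 ^ k) : ZMod 2)) := by
  constructor
  · simp [Nat.choose_one_right]
  · rw [key (k+1) n, key k n, key k ((n-1)/2), key k (n - 2^k), key k ((n + 2^k - 1)/2)]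
    set m := 2 ^ k with hmdef
    have hmpos : 0 < m := Nat.two_pow_pos k
    have h2 : 2 ^ (k+1) = 2 * m := by rw [hmdef, pow_succ]; ring
    rw [h2]
    obtain ⟨q, r, hn, hr⟩ : ∃ q r, n = 2 * (m * q) + r ∧ r < 2 * m :=
      ⟨n / (2*m), n % (2*m), by rw [← mul_assoc]; exact (Nat.div_add_mod n (2*m)).symm,
        Nat.mod_lt _ (by omega)⟩
    set s := m * q with hs
    have hA : n / (2*m) = q := by
      rw [hn, hs, ← mul_assoc]; exact mydiv_helper _ _ _ (by omega) hr
    rw [hA]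
    rcases Nat.lt_or_ge r m with hrm | hrm
    · -- r < m : first product vanishes
      have hB : n / m = 2 * q := by
        have e : m * (2 * q) = 2 * s := by rw [hs]; ring
        have hform : n = m * (2 * q) + r := by omega
        rw [hform, mydiv_helper _ _ _ hmpos hrm]
      rcases Nat.eq_zero_or_pos q with rfl | hq
      · have hD : (n - m) / m = 0 := by
          have : n - m = 0 := by omega
          simp [this]
        rw [hB, hD]
        simp
      · obtain ⟨q', rfl⟩ : ∃ q', q = q' + 1 := ⟨q - 1, by omega⟩
        have hD : (n - m) / m = 2 * q' + 1 := by
          have e : m * (2 * q' + 1) + m = 2 * s := by rw [hs]; ring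
          have hform : n - m = m * (2 * q' + 1) + r := by omega
          rw [hform, mydiv_helper _ _ _ hmpos hrm]
        have hE : (n + m - 1) / 2 / m = q' + 1 := by
          have h1 : n + m - 1 = 2 * s + (r + m - 1) := by omega
          have h22 : (n + m - 1) / 2 = s + (r + m - 1) / 2 := by
            rw [h1, Nat.mul_add_div two_pos]
          have h3 : s + (r + m - 1) / 2 = m * (q' + 1) + (r + m - 1) / 2 := by rw [hs]
          rw [h22, h3, mydiv_helper _ _ _ hmpos (by omega)]
        rw [hB, hD, hE]
        have e1 : 2 * (q' + 1) % 2 = 0 := by omega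
        have e2 : (2 * q' + 1) % 2 = 1 := by omega
        rw [e1, e2]
        simp
    · -- m ≤ r : second product vanishes
      have hB : n / m = 2 * q + 1 := by
        have e : m * (2 * q + 1) = 2 * s + m := by rw [hs]; ring
        have hform : n = m * (2 * q + 1) + (r - m) := by omega
        rw [hform, mydiv_helper _ _ _ hmpos (by omega)]
      have hC : (n - 1) / 2 / m = q := by
        have h1 : n - 1 = 2 * s + (r - 1) := by omega
        have h22 : (n - 1) / 2 = s + (r - 1) / 2 := by
          rw [h1, Nat.mul_add_div two_pos]
        have h3 : s + (r - 1) / 2 = m * q + (r - 1) / 2 := by rw [hs]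
        rw [h22, h3, mydiv_helper _ _ _ hmpos (by omega)]
      have hD : (n - m) / m = 2 * q := by
        have e : m * (2 * q) = 2 * s := by rw [hs]; ring
        have hform : n - m = m * (2 * q) + (r - m) := by omega
        rw [hform, mydiv_helper _ _ _ hmpos (by omega)]
      rw [hB, hC, hD]
      have e1 : (2 * q + 1) % 2 = 1 := by omega
      have e2 : 2 * q % 2 = 0 := by omega
      rw [e1, e2]
      simp
end
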